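/- Let G be a σ-compact locally compact Hausdorff group with left Haar measure θ, let (A_n) be a van Hove sequence in G, and let F ⊆ G be a compact set containing the identity. Then (F·A_n) is also a van Hove sequence. -/

import Mathlib

open MeasureTheory Pointwise Filter Topology

/-- The generalised van Hove boundary `∂^U W`. -/
def vanHoveBoundary {G : Type*} [TopologicalSpace G] [Group G] (U W : Set G) : Set G :=
  (U * closure W ∩ closure Wᶜ) ∪ (U * closure Wᶜ ∩ closure W)

/-- `A` is a van Hove sequence for the Haar measure `θ`. -/
def IsVanHoveSeq {G : Type*} [TopologicalSpace G] [Group G] [MeasurableSpace G]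
    (θ : Measure G) (A : ℕ → Set G) : Prop :=
  (∀ n, IsCompact (A n) ∧ 0 < θ (A n)) ∧
    ∀ K : Set G, IsCompact K →
      Tendsto (fun n => θ (vanHoveBoundary K (A n)) / θ (A n)) atTop (𝓝 0)

lemma vanHoveBoundary_mono_left {G : Type*} [TopologicalSpace G] [Group G]
    {K K' A : Set G} (h : K ⊆ K') :
    vanHoveBoundary K A ⊆ vanHoveBoundary K' A := by
  unfold vanHoveBoundary
  apply Set.union_subset_union <;>
    exact Set.inter_subset_inter_left _ (Set.mul_subset_mul_right h)

lemma vanHoveBoundary_mul_subset {G : Type*} [TopologicalSpace G] [Group G]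
    [IsTopologicalGroup G] {K F A : Set G} (hF : IsCompact F)
    (heF : (1 : G) ∈ F) (heK : (1 : G) ∈ K) :
    vanHoveBoundary K (F * A) ⊆ vanHoveBoundary (K * F) A := by
  have hAFA : A ⊆ F * A := Set.subset_mul_right A heF
  have hc1 : closure (F * A) ⊆ F * closure A :=
    closure_minimal (Set.mul_subset_mul_left subset_closure)
      (IsClosed.mul_left_of_isCompact isClosed_closure hF)
  have hc2 : closure (F * A)ᶜ ⊆ closure Aᶜ :=
    closure_mono (Set.compl_subset_compl.mpr hAFA)
  rintro x (⟨h1, h2⟩ | ⟨h1, h2⟩)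
  · left
    refine ⟨?_, hc2 h2⟩
    rw [mul_assoc]
    exact Set.mul_subset_mul_left hc1 h1
  · have hx1 : x ∈ K * F * closure Aᶜ := by
      have step1 : K * closure (F * A)ᶜ ⊆ K * closure Aᶜ :=
        Set.mul_subset_mul_left hc2
      have step2 : K * closure Aᶜ ⊆ K * F * closure Aᶜ :=
        Set.mul_subset_mul_right (Set.subset_mul_left K heF)
      exact step2 (step1 h1)
    by_cases hxc : x ∈ closure A
    · exact Or.inr ⟨hx1, hxc⟩
    · left
      refine ⟨?_, subset_closure (fun hxA => hxc (subset_closure hxA))⟩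
      have : F * closure A ⊆ K * F * closure A := by
        rw [mul_assoc]
        exact Set.subset_mul_right _ heK
      exact this (hc1 h2)

theorem isVanHoveSeq_mul_compact
    {G : Type*} [TopologicalSpace G] [Group G] [IsTopologicalGroup G] [T2Space G]
    [LocallyCompactSpace G] [SigmaCompactSpace G] [MeasurableSpace G] [BorelSpace G]
    (θ : Measure G) [θ.IsHaarMeasure]
    (A : ℕ → Set G) (hA : IsVanHoveSeq θ A)
    (F : Set G) (hF : IsCompact F) (heF : (1 : G) ∈ F) :
    IsVanHoveSeq θ (fun n => F * A n) := by
  obtain ⟨h0, hbd⟩ := hA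
  constructor
  · intro n
    refine ⟨hF.mul (h0 n).1, lt_of_lt_of_le (h0 n).2 ?_⟩
    exact measure_mono (Set.subset_mul_right (A n) heF)
  · intro K hK
    set K' : Set G := (K ∪ {1}) * F with hK'def
    have hK' : IsCompact K' := (hK.union isCompact_singleton).mul hF
    refine tendsto_of_tendsto_of_tendsto_of_le_of_le tendsto_const_nhds (hbd K' hK')
      (fun n => zero_le) (fun n => ?_)
    refine ENNReal.div_le_div (measure_mono ?_)
      (measure_mono (Set.subset_mul_right (A n) heF))
    refine (vanHoveBoundary_mono_left (K' := K ∪ {1}) Set.subset_union_left).trans ?_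
    exact vanHoveBoundary_mul_subset hF heF (Set.mem_union_right _ rfl)
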